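/- arXiv:1404.6857 — 2 statements merged into one kernel-verified Lean document; each statement's English description precedes it below -/
import Mathlib

section
/- Let D = Dⁿ ∪ Dˣ be a database instance and Q a monotone Boolean query with ¬Q(∅). A tuple t ∈ Dⁿ is an actual cause for Q if and only if DF(D, Dⁿ, κ(Q), t) ≠ ∅. (Proposition 2.) -/
/-- `t` is an actual cause for query `Q` in instance `D` with endogenous part `Dn`. -/
def IsCause {U : Type*} [DecidableEq U] (D Dn : Finset U) (Q : Finset U → Prop) (t : U) : Prop :=
  t ∈ Dn ∧ ∃ Γ ⊆ Dn, t ∉ Γ ∧ Q (D \ Γ) ∧ ¬ Q (D \ insert t Γ)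

/-- `D'` is an S-repair of `D` w.r.t. the denial constraint `κ(Q)`. -/
def IsSRepair {U : Type*} [DecidableEq U] (D : Finset U) (Q : Finset U → Prop)
    (D' : Finset U) : Prop :=
  D' ⊆ D ∧ ¬ Q D' ∧ ∀ D'' ⊆ D, ¬ Q D'' → D' ⊆ D'' → D'' = D'

/-- `DF(D, Dⁿ, κ(Q), t)`: differences `D ∖ D'` for S-repairs `D'` with `t ∈ D ∖ D' ⊆ Dⁿ`. -/
def DF {U : Type*} [DecidableEq U] (D Dn : Finset U) (Q : Finset U → Prop) (t : U) :
    Set (Finset U) :=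
  { s | ∃ D', IsSRepair D Q D' ∧ s = D \ D' ∧ t ∈ s ∧ s ⊆ Dn }

/-! If an S-repair `D'` has `t ∈ D \ D' ⊆ Dⁿ`, then `Γ = (D \ D') \ {t}` is a contingency set for `t`: removing it leaves
`D' ∪ {t}`, which satisfies `Q` by maximality. Conversely, if `Γ` witnesses that `t` is a cause,
extend `D \ (Γ ∪ {t})` to an S-repair `D'`; by monotonicity `t ∉ D'`, since `D' ∪ {t} ⊇ D \ Γ`, and
`D \ D' ⊆ Γ ∪ {t} ⊆ Dⁿ`. -/

namespace IsSRepair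

variable {U : Type*} [DecidableEq U] {D D' : Finset U} {Q : Finset U → Prop}

theorem iff_maximal : IsSRepair D Q D' ↔ Maximal (fun X => X ⊆ D ∧ ¬ Q X) D' :=
  ⟨fun ⟨hD', hQ, hmax⟩ => ⟨⟨hD', hQ⟩, fun _ hX hle => (hmax _ hX.1 hX.2 hle).le⟩,
    fun h => ⟨h.prop.1, h.prop.2, fun _ hX hQX hle => (h.eq_of_le ⟨hX, hQX⟩ hle).symm⟩⟩

theorem exists_superset {B : Finset U} (hB : B ⊆ D) (hQB : ¬ Q B) :
    ∃ D', IsSRepair D Q D' ∧ B ⊆ D' := by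
  have hfin : {X : Finset U | X ⊆ D ∧ ¬ Q X}.Finite :=
    D.powerset.finite_toSet.subset fun X hX => Finset.mem_powerset.2 hX.1
  obtain ⟨D', hBD', hmax⟩ := hfin.exists_le_maximal ⟨hB, hQB⟩
  exact ⟨D', iff_maximal.2 hmax, hBD'⟩

theorem query_insert (h : IsSRepair D Q D') {t : U} (htD : t ∈ D) (ht : t ∉ D') :
    Q (insert t D') := by
  by_contra hQ
  exact ht (h.2.2 _ (Finset.insert_subset htD h.1) hQ (Finset.subset_insert t D') ▸
    Finset.mem_insert_self t D')

end IsSRepair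

section

variable {U : Type*} [DecidableEq U] {D Dn : Finset U} {Q : Finset U → Prop} {t : U}

theorem IsCause.nonempty_DF (hQ : Monotone Q) (h : IsCause D Dn Q t) : (DF D Dn Q t).Nonempty := by
  obtain ⟨htn, Γ, hΓ, -, hQΓ, hQtΓ⟩ := h
  have htD : t ∈ D := by
    by_contra htD
    exact hQtΓ (Finset.sdiff_insert_of_notMem htD Γ ▸ hQΓ)
  obtain ⟨D', hD', hBD'⟩ := IsSRepair.exists_superset Finset.sdiff_subset hQtΓ
  have htD' : t ∉ D' := fun ht => hD'.2.1 <| hQ (calc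
    D \ Γ ⊆ insert t ((D \ Γ).erase t) := Finset.insert_erase_subset t _
    _ = insert t (D \ insert t Γ) := by rw [Finset.sdiff_insert]
    _ ⊆ D' := Finset.insert_subset ht hBD') hQΓ
  have hDF : D \ D' ⊆ Dn := calc
    D \ D' ⊆ D \ (D \ insert t Γ) := Finset.sdiff_subset_sdiff subset_rfl hBD'
    _ ⊆ insert t Γ := by rw [sdiff_sdiff_right_self]; exact Finset.inter_subset_right
    _ ⊆ Dn := Finset.insert_subset htn hΓ
  exact ⟨D \ D', D', hD', rfl, Finset.mem_sdiff.2 ⟨htD, htD'⟩, hDF⟩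

theorem isCause_of_nonempty_DF (h : (DF D Dn Q t).Nonempty) : IsCause D Dn Q t := by
  obtain ⟨_, D', hD', rfl, hts, hsDn⟩ := h
  have htD : t ∈ D := (Finset.mem_sdiff.1 hts).1
  have htD' : t ∉ D' := (Finset.mem_sdiff.1 hts).2
  refine ⟨hsDn hts, (D \ D').erase t, (Finset.erase_subset _ _).trans hsDn,
    Finset.notMem_erase t _, ?_, ?_⟩
  · rw [Finset.sdiff_erase htD, Finset.sdiff_sdiff_eq_self hD'.1]
    exact hD'.query_insert htD htD'
  · rw [Finset.insert_erase hts, Finset.sdiff_sdiff_eq_self hD'.1]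
    exact hD'.2.1

end

theorem cause_iff_DF_nonempty_general
    {U : Type*} [DecidableEq U] (D Dn : Finset U) (Q : Finset U → Prop)
    (hmono : ∀ S S' : Finset U, S ⊆ S' → Q S → Q S')
    (t : U) :
    IsCause D Dn Q t ↔ DF D Dn Q t ≠ ∅ := by
  rw [← Set.nonempty_iff_ne_empty]
  exact ⟨IsCause.nonempty_DF fun S S' h => hmono S S' h, isCause_of_nonempty_DF⟩

/-- Proposition 2: `t ∈ Dⁿ` is an actual cause for `Q` iff `DF(D, Dⁿ, κ(Q), t) ≠ ∅`. -/
theorem cause_iff_DF_nonempty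
    {U : Type*} [DecidableEq U] (D Dn Dx : Finset U) (Q : Finset U → Prop)
    (hD : D = Dn ∪ Dx) (hdisj : Disjoint Dn Dx)
    (hmono : ∀ S S' : Finset U, S ⊆ S' → Q S → Q S')
    (hempty : ¬ Q ∅)
    (t : U) (ht : t ∈ Dn) :
    IsCause D Dn Q t ↔ DF D Dn Q t ≠ ∅ :=
  cause_iff_DF_nonempty_general D Dn Q hmono t
end

section
/- Let D = Dⁿ ∪ Dˣ be a database instance, Q a monotone Boolean query with ¬Q(∅), D ⊨ Q, and t ∈ Dⁿ. (a) ρ(t) = 0 if and only if MCD(M, t) = ∅. (b) Otherwise, ρ(t) = 1/|s| for any s ∈ MCD(M, t). (Proposition on responsibility and diagnoses.) -/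
open Classical

/-- The responsibility `ρ(t)`: `1/(1+m)` for `m` the minimum cardinality of a
contingency set for `t`, and `0` if `t` is not an actual cause. -/
noncomputable def resp {U : Type*} [DecidableEq U] (D Dn : Finset U) (Q : Finset U → Prop)
    (t : U) : ℚ :=
  if IsCause D Dn Q t then
    1 / ((sInf { n : ℕ | ∃ Γ ⊆ Dn, t ∉ Γ ∧ Q (D \ Γ) ∧ ¬ Q (D \ insert t Γ) ∧ Γ.card = n }
      : ℕ) + 1)
  else 0

/-- A diagnosis for the diagnosis problem `M` associated with `Q` on `D`. -/
def IsDiagnosis {U : Type*} [DecidableEq U] (D Dn : Finset U) (Q : Finset U → Prop)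
    (Δ : Finset U) : Prop :=
  Δ ⊆ Dn ∧ ¬ Q (D \ Δ)

/-- A subset-minimal diagnosis. -/
def IsMinDiagnosis {U : Type*} [DecidableEq U] (D Dn : Finset U) (Q : Finset U → Prop)
    (Δ : Finset U) : Prop :=
  IsDiagnosis D Dn Q Δ ∧ ∀ Δ' ⊂ Δ, ¬ IsDiagnosis D Dn Q Δ'

/-- `MCD(M, t)`: the subset-minimal diagnoses containing `t` that have minimum
cardinality among subset-minimal diagnoses containing `t`. -/
def MCD {U : Type*} [DecidableEq U] (D Dn : Finset U) (Q : Finset U → Prop) (t : U) :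
    Set (Finset U) :=
  { Δ | IsMinDiagnosis D Dn Q Δ ∧ t ∈ Δ ∧
      ∀ Δ', IsMinDiagnosis D Dn Q Δ' → t ∈ Δ' → Δ.card ≤ Δ'.card }

/-!
Contingency sets for `t` and subset-minimal diagnoses containing `t` correspond under
`Γ ↦ insert t Γ` and `Δ ↦ Δ.erase t`, up to one element. Removing `t` from a minimal diagnosis
leaves a non-diagnosis, i.e. `Q` still holds, so `Δ.erase t` is a contingency set. Conversely,
`insert t Γ` is a diagnosis; a minimal diagnosis inside it must contain `t`, since otherwise it
would lie inside `Γ`, and by monotonicity `Q (D \ Γ)` would make it a non-diagnosis. Hence the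
minimum contingency size plus one is the size of every element of `MCD`.
-/

section Diagnosis

variable {U : Type*} [DecidableEq U] {D Dn : Finset U} {Q : Finset U → Prop} {t : U}

def IsContingency (D Dn : Finset U) (Q : Finset U → Prop) (t : U) (Γ : Finset U) : Prop :=
  Γ ⊆ Dn ∧ t ∉ Γ ∧ Q (D \ Γ) ∧ ¬ Q (D \ insert t Γ)

theorem isCause_iff : IsCause D Dn Q t ↔ t ∈ Dn ∧ ∃ Γ, IsContingency D Dn Q t Γ :=
  Iff.rfl

theorem resp_eq_zero_iff : resp D Dn Q t = 0 ↔ ¬ IsCause D Dn Q t := by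
  unfold resp
  split_ifs with h
  · simp only [h, not_true_eq_false, iff_false]
    positivity
  · simp only [h, not_false_eq_true]

theorem resp_eq_of_isLeast {m : ℕ}
    (hm : IsLeast {n | ∃ Γ, IsContingency D Dn Q t Γ ∧ Γ.card = n} m) (ht : t ∈ Dn) :
    resp D Dn Q t = 1 / ((m : ℚ) + 1) := by
  obtain ⟨Γ, hΓ, -⟩ := hm.1
  have hset : {n | ∃ Γ ⊆ Dn, t ∉ Γ ∧ Q (D \ Γ) ∧ ¬ Q (D \ insert t Γ) ∧ Γ.card = n} =
      {n | ∃ Γ, IsContingency D Dn Q t Γ ∧ Γ.card = n} := by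
    simp only [IsContingency, and_assoc]
  rw [resp, if_pos ⟨ht, Γ, hΓ⟩, hset, hm.csInf_eq]

theorem IsDiagnosis.exists_isMinDiagnosis_subset {Δ : Finset U}
    (hΔ : IsDiagnosis D Dn Q Δ) : ∃ Δ' ⊆ Δ, IsMinDiagnosis D Dn Q Δ' := by
  induction Δ using Finset.strongInduction with
  | _ Δ ih =>
    by_cases hmin : ∀ Δ' ⊂ Δ, ¬ IsDiagnosis D Dn Q Δ'
    · exact ⟨Δ, subset_rfl, hΔ, hmin⟩
    · push Not at hmin
      obtain ⟨Δ', hΔ'Δ, hΔ'⟩ := hmin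
      obtain ⟨Δ'', hΔ''Δ', hΔ''⟩ := ih Δ' hΔ'Δ hΔ'
      exact ⟨Δ'', hΔ''Δ'.trans hΔ'Δ.subset, hΔ''⟩

theorem IsMinDiagnosis.isContingency_erase {Δ : Finset U} (hΔ : IsMinDiagnosis D Dn Q Δ)
    (htΔ : t ∈ Δ) : IsContingency D Dn Q t (Δ.erase t) := by
  have herase : Δ.erase t ⊆ Dn := (Δ.erase_subset t).trans hΔ.1.1
  refine ⟨herase, Δ.notMem_erase t, ?_, ?_⟩
  · by_contra hQ
    exact hΔ.2 _ (Finset.erase_ssubset htΔ) ⟨herase, hQ⟩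
  · rw [Finset.insert_erase htΔ]
    exact hΔ.1.2

theorem IsContingency.exists_isMinDiagnosis (hmono : ∀ S S' : Finset U, S ⊆ S' → Q S → Q S')
    (ht : t ∈ Dn) {Γ : Finset U} (hΓ : IsContingency D Dn Q t Γ) :
    ∃ Δ ⊆ insert t Γ, IsMinDiagnosis D Dn Q Δ ∧ t ∈ Δ := by
  obtain ⟨hΓDn, htΓ, hQ, hnQ⟩ := hΓ
  obtain ⟨Δ, hΔsub, hΔ⟩ :=
    IsDiagnosis.exists_isMinDiagnosis_subset (Q := Q) ⟨Finset.insert_subset ht hΓDn, hnQ⟩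
  refine ⟨Δ, hΔsub, hΔ, ?_⟩
  by_contra htΔ
  have hΔΓ : Δ ⊆ Γ := (Finset.subset_insert_iff_of_notMem htΔ).mp hΔsub
  exact hΔ.1.2 (hmono _ _ (Finset.sdiff_subset_sdiff subset_rfl hΔΓ) hQ)

theorem isCause_iff_MCD_nonempty (hmono : ∀ S S' : Finset U, S ⊆ S' → Q S → Q S')
    (ht : t ∈ Dn) : IsCause D Dn Q t ↔ (MCD D Dn Q t).Nonempty := by
  constructor
  · rw [isCause_iff]
    rintro ⟨-, Γ, hΓ⟩
    obtain ⟨Δ₀, -, hΔ₀⟩ := hΓ.exists_isMinDiagnosis hmono ht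
    set M := {Δ | IsMinDiagnosis D Dn Q Δ ∧ t ∈ Δ}
    obtain ⟨hmin, htmin⟩ : Function.argminOn Finset.card M ⟨Δ₀, hΔ₀⟩ ∈ M :=
      Function.argminOn_mem _ _ _
    exact ⟨_, hmin, htmin, fun Δ hΔ htΔ => Function.argminOn_le Finset.card M ⟨hΔ, htΔ⟩⟩
  · rintro ⟨s, hs, hts, -⟩
    exact ⟨ht, _, hs.isContingency_erase hts⟩

theorem isLeast_card_contingency_of_mem_MCD
    (hmono : ∀ S S' : Finset U, S ⊆ S' → Q S → Q S') (ht : t ∈ Dn) {s : Finset U}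
    (hs : s ∈ MCD D Dn Q t) :
    IsLeast {n | ∃ Γ, IsContingency D Dn Q t Γ ∧ Γ.card = n} (s.erase t).card := by
  obtain ⟨hsmin, hts, hsle⟩ := hs
  refine ⟨⟨_, hsmin.isContingency_erase hts, rfl⟩, ?_⟩
  rintro _ ⟨Γ, hΓ, rfl⟩
  obtain ⟨Δ, hΔsub, hΔ, htΔ⟩ := hΓ.exists_isMinDiagnosis hmono ht
  have := Finset.card_erase_add_one hts
  have := (hsle Δ hΔ htΔ).trans ((Finset.card_le_card hΔsub).trans (Γ.card_insert_le t))
  omega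

end Diagnosis

theorem responsibility_from_diagnoses_general
    {U : Type*} [DecidableEq U] (D Dn : Finset U) (Q : Finset U → Prop)
    (hmono : ∀ S S' : Finset U, S ⊆ S' → Q S → Q S')
    (t : U) (ht : t ∈ Dn) :
    (resp D Dn Q t = 0 ↔ MCD D Dn Q t = ∅) ∧
    (∀ s ∈ MCD D Dn Q t, resp D Dn Q t = 1 / (s.card : ℚ)) := by
  refine ⟨?_, fun s hs => ?_⟩
  · rw [resp_eq_zero_iff, isCause_iff_MCD_nonempty hmono ht, Set.not_nonempty_iff_eq_empty]
  · rw [resp_eq_of_isLeast (isLeast_card_contingency_of_mem_MCD hmono ht hs) ht,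
      ← Finset.card_erase_add_one hs.2.1]
    push_cast
    rfl

/-- Responsibility and diagnoses: (a) `ρ(t) = 0` iff `MCD(M, t) = ∅`;
(b) otherwise `ρ(t) = 1/|s|` for any `s ∈ MCD(M, t)`. -/
theorem responsibility_from_diagnoses
    {U : Type*} [DecidableEq U] (D Dn Dx : Finset U) (Q : Finset U → Prop)
    (hD : D = Dn ∪ Dx) (hdisj : Disjoint Dn Dx)
    (hmono : ∀ S S' : Finset U, S ⊆ S' → Q S → Q S')
    (hempty : ¬ Q ∅) (hQD : Q D)
    (t : U) (ht : t ∈ Dn) :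
    (resp D Dn Q t = 0 ↔ MCD D Dn Q t = ∅) ∧
    (∀ s ∈ MCD D Dn Q t, resp D Dn Q t = 1 / (s.card : ℚ)) :=
  responsibility_from_diagnoses_general D Dn Q hmono t ht
end
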